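/- arXiv:1101.4469 — 2 statements merged into one kernel-verified Lean document; each statement's English description precedes it below -/
import Mathlib

section
/- The matrix U of size (2m+2)×(2m+2) defined by U_{2i,m-j} = U_{2i,m+j+1} = ((-1)^i/√2)·Q̃_j(i;α,β,m) and U_{2i+1,m-j} = -U_{2i+1,m+j+1} = -((-1)^i/√2)·Q̃_j(i;α+1,β-1,m), for i,j ∈ {0,1,…,m}, is orthogonal: UᵀU = UUᵀ = I. -/
open Finset Matrix

/-- Pochhammer symbol `(a)_k = a(a+1)⋯(a+k-1)`. -/
noncomputable def poch (a : ℝ) (k : ℕ) : ℝ := ∏ i ∈ Finset.range k, (a + i)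

/-- The Hahn polynomial `Q_n(x;α,β,m)` as a terminating ₃F₂ series. -/
noncomputable def hahnQ (n : ℕ) (x α β : ℝ) (m : ℕ) : ℝ :=
  ∑ k ∈ Finset.range (n + 1),
    poch (-(n : ℝ)) k * poch ((n : ℝ) + α + β + 1) k * poch (-x) k /
      ((k.factorial : ℝ) * poch (α + 1) k * poch (-(m : ℝ)) k)

/-- The Hahn weight `w(x;α,β,m) = C(α+x,x) C(m+β-x,m-x)`. -/
noncomputable def hahnW (x : ℕ) (α β : ℝ) (m : ℕ) : ℝ :=
  (poch (α + 1) x / (x.factorial : ℝ)) * (poch (β + 1) (m - x) / ((m - x).factorial : ℝ))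

/-- The squared norm `h_n(α,β,m)` of the Hahn polynomials. -/
noncomputable def hahnH (n : ℕ) (α β : ℝ) (m : ℕ) : ℝ :=
  ((-1 : ℝ) ^ n * poch ((n : ℝ) + α + β + 1) (m + 1) * poch (β + 1) n * (n.factorial : ℝ)) /
    ((2 * (n : ℝ) + α + β + 1) * poch (α + 1) n * poch (-(m : ℝ)) n * (m.factorial : ℝ))

/-- Orthonormal Hahn function `Q̃_n(x;α,β,m)`. -/
noncomputable def hahnQt (n x : ℕ) (α β : ℝ) (m : ℕ) : ℝ :=
  Real.sqrt (hahnW x α β m) * hahnQ n (x : ℝ) α β m / Real.sqrt (hahnH n α β m)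

/-- The matrix `U` of eigenvectors, built from Hahn polynomials with
parameters `(α,β)` (even rows) and `(α+1,β-1)` (odd rows). -/
noncomputable def hahnU (α β : ℝ) (m : ℕ) : Matrix (Fin (2 * m + 2)) (Fin (2 * m + 2)) ℝ :=
  Matrix.of fun r c =>
    let i : ℕ := (r : ℕ) / 2
    let j : ℕ := if (c : ℕ) ≤ m then m - (c : ℕ) else (c : ℕ) - m - 1
    if (r : ℕ) % 2 = 0 then
      ((-1 : ℝ) ^ i / Real.sqrt 2) * hahnQt j i α β m
    else
      (if (c : ℕ) ≤ m then (-1 : ℝ) else 1) * ((-1 : ℝ) ^ i / Real.sqrt 2)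
        * hahnQt j i (α + 1) (β - 1) m

/-- The spin chain couplings `J_k`. -/
noncomputable def hahnJ (α β : ℝ) (m : ℕ) (k : ℕ) : ℝ :=
  if k % 2 = 1 then Real.sqrt (((k : ℝ) + 1) * ((2 * m + 1 : ℝ) - k))
  else Real.sqrt (((k : ℝ) + 2 * α + 2) * ((2 * m : ℝ) + 2 * β - k))

/-- The tridiagonal single-excitation interaction matrix `M`. -/
noncomputable def hahnM (α β : ℝ) (m : ℕ) : Matrix (Fin (2 * m + 2)) (Fin (2 * m + 2)) ℝ :=
  Matrix.of fun r c =>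
    if (r : ℕ) + 1 = (c : ℕ) then hahnJ α β m r
    else if (c : ℕ) + 1 = (r : ℕ) then hahnJ α β m c
    else 0

/-- The eigenvalues `ε_{m-k} = -2√((α+k+1)(β+k))`, `ε_{m+k+1} = 2√((α+k+1)(β+k))`. -/
noncomputable def hahnEps (α β : ℝ) (m : ℕ) (c : Fin (2 * m + 2)) : ℝ :=
  if (c : ℕ) ≤ m then
    -2 * Real.sqrt ((α + (m - (c : ℕ) : ℕ) + 1) * (β + (m - (c : ℕ) : ℕ)))
  else
    2 * Real.sqrt ((α + ((c : ℕ) - m - 1 : ℕ) + 1) * (β + ((c : ℕ) - m - 1 : ℕ)))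

/-- The correlation function `f_{r,s}(t)`. -/
noncomputable def hahnCorr (α β : ℝ) (m : ℕ) (r s : Fin (2 * m + 2)) (t : ℝ) : ℂ :=
  ∑ j : Fin (2 * m + 2),
    ((hahnU α β m r j * hahnU α β m s j : ℝ) : ℂ)
      * Complex.exp (-Complex.I * t * (hahnEps α β m j : ℝ))

/-!
For each admissible parameter pair the functions `x ↦ Q̃ₙ(x)`, `n ≤ m`, are orthonormal on
`{0, …, m}`. Orthogonality: the `Qₙ` are eigenfunctions, with the distinct eigenvalues
`n (n + α + β + 1)`, of a second-order difference operator which summation by parts shows to be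
symmetric for the weight `w`. Norms: the forward shift
`Qₙ₊₁(x + 1) - Qₙ₊₁(x) ∝ Qₙ(x; α + 1, β + 1, m - 1)` and the same summation by parts reduce
`hₙ₊₁(α, β, m)` to `hₙ(α + 1, β + 1, m - 1)`, and `h₀` is Chu–Vandermonde.

Column `c` of `U` carries degree `j = |c - m - ½| - ½` and a sign `s` telling on which side of
the middle it lies; the rows `2i, 2i + 1` contribute `½ (Q̃ⱼ Q̃ⱼ' + s s' Q̃*ⱼ Q̃*ⱼ')(i)`, the
star marking the parameters `(α + 1, β - 1)`. Summing over `i` gives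
`½ (δⱼⱼ' + s s' δⱼⱼ') = δ_cc'`, and for a square matrix `UᵀU = 1` implies `UUᵀ = 1`.
-/

section Pochhammer

lemma poch_zero (a : ℝ) : poch a 0 = 1 := prod_range_zero _

lemma poch_succ_right (a : ℝ) (k : ℕ) : poch a (k + 1) = poch a k * (a + k) :=
  prod_range_succ _ _

lemma poch_eq_eval_ascPochhammer (a : ℝ) (k : ℕ) : poch a k = (ascPochhammer ℝ k).eval a := by
  induction k with
  | zero => simp [poch]
  | succ k ih => rw [poch_succ_right, ih, ascPochhammer_succ_eval]

lemma poch_succ_left (a : ℝ) (k : ℕ) : poch a (k + 1) = a * poch (a + 1) k := by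
  simp [poch_eq_eval_ascPochhammer, ascPochhammer_succ_left]

lemma poch_pos {a : ℝ} (ha : 0 < a) (k : ℕ) : 0 < poch a k :=
  prod_pos fun _ _ => by positivity

lemma poch_eq_neg_one_pow_mul_smeval_descPochhammer (a : ℝ) (k : ℕ) :
    poch a k = (-1) ^ k * (descPochhammer ℤ k).smeval (-a) := by
  rw [poch_eq_eval_ascPochhammer, ← Polynomial.ascPochhammer_smeval_eq_eval, ← neg_neg a,
    Polynomial.ascPochhammer_smeval_neg_eq_descPochhammer, neg_neg, Int.negOnePow_def,
    Units.smul_def]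
  simp

/-- Chu–Vandermonde, from its descending form `Ring.descPochhammer_smeval_add`. -/
lemma poch_add_div_factorial (a b : ℝ) (M : ℕ) :
    poch (a + b) M / M.factorial
      = ∑ y ∈ range (M + 1), poch a y / y.factorial * (poch b (M - y) / (M - y).factorial) := by
  have h := Ring.descPochhammer_smeval_add M (Commute.all (-a) (-b))
  rw [Finset.Nat.sum_antidiagonal_eq_sum_range_succ (fun i j => (M.choose i : ℝ) *
    ((descPochhammer ℤ i).smeval (-a) * (descPochhammer ℤ j).smeval (-b)))] at h
  rw [eq_comm, eq_div_iff (by positivity), sum_mul, poch_eq_neg_one_pow_mul_smeval_descPochhammer,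
    neg_add, h, mul_sum]
  refine sum_congr rfl fun y hy => ?_
  have hy : y ≤ M := Nat.lt_succ_iff.mp (mem_range.mp hy)
  rw [poch_eq_neg_one_pow_mul_smeval_descPochhammer, poch_eq_neg_one_pow_mul_smeval_descPochhammer,
    Nat.cast_choose ℝ hy, ← pow_mul_pow_sub (-1 : ℝ) hy]
  field_simp

lemma poch_neg_add_one_sub (x : ℝ) (k : ℕ) :
    poch (-(x + 1)) (k + 1) - poch (-x) (k + 1) = -((k : ℝ) + 1) * poch (-x) k := by
  rw [poch_succ_left (-(x + 1)), show -(x + 1) + 1 = -x by ring, poch_succ_right]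
  ring

end Pochhammer

section HahnPolynomial

noncomputable def hahnCoeff (n : ℕ) (α β : ℝ) (m k : ℕ) : ℝ :=
  poch (-n) k * poch (n + α + β + 1) k / (k.factorial * poch (α + 1) k * poch (-m) k)

lemma hahnQ_eq_sum_hahnCoeff (n : ℕ) (x α β : ℝ) (m : ℕ) :
    hahnQ n x α β m = ∑ k ∈ range (n + 1), hahnCoeff n α β m k * poch (-x) k :=
  sum_congr rfl fun k _ => by rw [hahnCoeff]; ring

lemma hahnCoeff_zero (n : ℕ) (α β : ℝ) (m : ℕ) : hahnCoeff n α β m 0 = 1 := by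
  simp [hahnCoeff, poch_zero]

lemma hahnQ_zero (x α β : ℝ) (m : ℕ) : hahnQ 0 x α β m = 1 := by
  simp [hahnQ_eq_sum_hahnCoeff, hahnCoeff_zero, poch_zero]

lemma hahnQ_at_zero (n : ℕ) (α β : ℝ) (m : ℕ) : hahnQ n 0 α β m = 1 := by
  simp [hahnQ_eq_sum_hahnCoeff, sum_range_succ', poch_succ_left, hahnCoeff_zero, poch_zero]

lemma hahnCoeff_succ_succ (n : ℕ) (α β : ℝ) (m k : ℕ) :
    ((k : ℝ) + 1) * hahnCoeff (n + 1) α β (m + 1) (k + 1)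
      = (n + 1) * (n + α + β + 2) / ((α + 1) * (m + 1)) * hahnCoeff n (α + 1) (β + 1) m k := by
  simp only [hahnCoeff, poch_succ_left, Nat.factorial_succ]
  push_cast
  have hk : (k : ℝ) + 1 ≠ 0 := by positivity
  rw [show -((n : ℝ) + 1) + 1 = -n by ring, show -((m : ℝ) + 1) + 1 = -m by ring,
    show (n : ℝ) + 1 + α + β + 1 = n + α + β + 2 by ring,
    show (n : ℝ) + α + β + 2 + 1 = n + (α + 1) + (β + 1) + 1 by ring]
  field_simp

lemma hahnQ_forward_shift (n : ℕ) (x α β : ℝ) (m : ℕ) :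
    hahnQ (n + 1) (x + 1) α β (m + 1) - hahnQ (n + 1) x α β (m + 1)
      = -((n + 1) * (n + α + β + 2) / ((α + 1) * (m + 1))) * hahnQ n x (α + 1) (β + 1) m := by
  rw [hahnQ_eq_sum_hahnCoeff, hahnQ_eq_sum_hahnCoeff, hahnQ_eq_sum_hahnCoeff,
    ← sum_sub_distrib, sum_range_succ', mul_sum]
  simp only [poch_zero, sub_self, add_zero]
  refine sum_congr rfl fun k _ => ?_
  rw [← mul_sub, poch_neg_add_one_sub, neg_mul, mul_neg, neg_mul, ← mul_assoc, mul_comm _ (_ + 1),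
    hahnCoeff_succ_succ, mul_assoc]

end HahnPolynomial

section DifferenceEquation

noncomputable def hahnOp (α β : ℝ) (m : ℕ) (f : ℝ → ℝ) (x : ℝ) : ℝ :=
  (x + α + 1) * (x - m) * (f (x + 1) - f x) + x * (x - β - m - 1) * (f (x - 1) - f x)

lemma hahnOp_sum {ι : Type*} (s : Finset ι) (c : ι → ℝ) (f : ι → ℝ → ℝ) (α β : ℝ) (m : ℕ)
    (x : ℝ) :
    hahnOp α β m (fun y => ∑ i ∈ s, c i * f i y) x = ∑ i ∈ s, c i * hahnOp α β m (f i) x := by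
  simp only [hahnOp, ← sum_sub_distrib, mul_sum, ← sum_add_distrib]
  exact sum_congr rfl fun _ _ => by ring

lemma hahnOp_poch_neg (α β : ℝ) (m k : ℕ) (x : ℝ) :
    hahnOp α β m (fun y => poch (-y) (k + 1)) x
      = (k + 1) * (k + α + β + 2) * poch (-x) (k + 1)
        + (k + 1) * (m - k) * (α + k + 1) * poch (-x) k := by
  have shift_down : x * poch (-x + 1) k = -(poch (-x) k * (-x + k)) := by
    rw [← poch_succ_right, poch_succ_left]; ring
  simp only [hahnOp]
  rw [poch_succ_left (-(x + 1)), show -(x + 1) + 1 = -x by ring, show -(x - 1) = -x + 1 by ring,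
    poch_succ_right (-x + 1), poch_succ_right (-x) k]
  linear_combination (x - β - m - 1) * (-x + 1 + k) * shift_down

lemma hahnCoeff_succ_mul {α : ℝ} {m k : ℕ} (hα : -1 < α) (hkm : k < m) (n : ℕ) (β : ℝ) :
    (k + 1) * (m - k) * (α + k + 1) * hahnCoeff n α β m (k + 1)
      = (n * (n + α + β + 1) - k * (k + α + β + 1)) * hahnCoeff n α β m k := by
  have hsucc : hahnCoeff n α β m (k + 1) = hahnCoeff n α β m k
      * ((-n + k) * (n + α + β + 1 + k) / ((k + 1) * (α + 1 + k) * (-m + k))) := by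
    simp only [hahnCoeff, poch_succ_right, Nat.factorial_succ, div_mul_div_comm]
    push_cast
    congr 1 <;> ring
  have hk : (k : ℝ) + 1 ≠ 0 := by positivity
  have hαk : α + 1 + k ≠ 0 := by
    have : (0 : ℝ) ≤ k := k.cast_nonneg
    linarith
  have hmk : -(m : ℝ) + k ≠ 0 := by
    have : (k : ℝ) < m := by exact_mod_cast hkm
    linarith
  rw [hsucc]
  field_simp
  ring

lemma hahnOp_hahnQ {α : ℝ} {m n : ℕ} (hα : -1 < α) (hnm : n ≤ m) (β x : ℝ) :
    hahnOp α β m (fun y => hahnQ n y α β m) x = n * (n + α + β + 1) * hahnQ n x α β m := by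
  set c := hahnCoeff n α β m
  set g : ℕ → ℝ := fun k => (n * (n + α + β + 1) - k * (k + α + β + 1)) * c k * poch (-x) k
  have hterm : ∀ k ∈ range n, c (k + 1) * hahnOp α β m (fun y => poch (-y) (k + 1)) x
      = n * (n + α + β + 1) * (c (k + 1) * poch (-x) (k + 1)) + (g k - g (k + 1)) := by
    intro k hk
    have hc := hahnCoeff_succ_mul hα ((mem_range.mp hk).trans_le hnm) n β
    rw [hahnOp_poch_neg]
    simp only [g]
    push_cast
    linear_combination poch (-x) k * hc
  simp only [hahnQ_eq_sum_hahnCoeff, hahnOp_sum]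
  rw [sum_range_succ', sum_congr rfl hterm, sum_add_distrib, sum_range_sub', ← mul_sum,
    sum_range_succ' _ n]
  simp only [g, c, hahnOp, hahnCoeff_zero, poch_zero, CharP.cast_eq_zero, zero_add, zero_mul,
    sub_zero, mul_one, sub_self, neg_add_rev, mul_zero, neg_sub, add_zero]
  ring

end DifferenceEquation

section Weight

lemma hahnW_pos {α β : ℝ} (hα : -1 < α) (hβ : -1 < β) (x m : ℕ) : 0 < hahnW x α β m := by
  have := poch_pos (a := α + 1) (by linarith) x
  have := poch_pos (a := β + 1) (by linarith) (m - x)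
  unfold hahnW
  positivity

lemma hahnW_succ_mul {x m : ℕ} (hx : x < m) (α β : ℝ) :
    hahnW (x + 1) α β m * ((x + 1) * ((x + 1) - β - m - 1))
      = hahnW x α β m * ((x + α + 1) * (x - m)) := by
  obtain ⟨d, rfl⟩ := Nat.exists_eq_add_of_lt hx
  unfold hahnW
  rw [show x + d + 1 - (x + 1) = d by omega, show x + d + 1 - x = d + 1 by omega]
  simp only [poch_succ_right, Nat.factorial_succ]
  push_cast
  have hx1 : (x : ℝ) + 1 ≠ 0 := by positivity
  have hd1 : (d : ℝ) + 1 ≠ 0 := by positivity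
  field_simp
  ring

lemma hahnW_mul_eq_hahnW_shift {x m : ℕ} (hx : x ≤ m) (α β : ℝ) :
    hahnW x α β (m + 1) * ((x + α + 1) * (m + 1 - x))
      = (α + 1) * (β + 1) * hahnW x (α + 1) (β + 1) m := by
  obtain ⟨d, rfl⟩ := Nat.exists_eq_add_of_le hx
  unfold hahnW
  rw [show x + d + 1 - x = d + 1 by omega, show x + d - x = d by omega]
  simp only [poch_succ_left, Nat.factorial_succ]
  have hpoch : poch (α + 1) x * (x + α + 1) = (α + 1) * poch (α + 1 + 1) x := by
    rw [← poch_succ_left, poch_succ_right]; ring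
  push_cast
  have hd1 : (d : ℝ) + 1 ≠ 0 := by positivity
  field_simp
  linear_combination (β + 1) * poch (β + 1 + 1) d * (d + 1) * hpoch

end Weight

section Orthogonality

lemma sum_hahnW_mul_hahnOp_mul (α β : ℝ) (m : ℕ) (f g : ℝ → ℝ) :
    ∑ x ∈ range (m + 1), hahnW x α β m * hahnOp α β m f x * g x
      = ∑ x ∈ range m, hahnW x α β m * ((x + α + 1) * (m - x))
          * (f (x + 1) - f x) * (g (x + 1) - g x) := by
  set A : ℕ → ℝ := fun x => hahnW x α β m * ((x + α + 1) * (x - m)) * (f (x + 1) - f x) * g x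
  set B : ℕ → ℝ := fun x => hahnW x α β m * (x * (x - β - m - 1)) * (f (x - 1) - f x) * g x
  have hsplit : ∀ x ∈ range (m + 1), hahnW x α β m * hahnOp α β m f x * g x = A x + B x :=
    fun x _ => by simp only [A, B, hahnOp]; ring
  have hshift : ∀ x ∈ range m, A x + B (x + 1) = hahnW x α β m * ((x + α + 1) * (m - x))
      * (f (x + 1) - f x) * (g (x + 1) - g x) := by
    intro x hx
    have hw := hahnW_succ_mul (mem_range.mp hx) α β
    simp only [A, B]
    push_cast
    rw [add_sub_cancel_right]
    linear_combination (f x - f (x + 1)) * g (x + 1) * hw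
  rw [sum_congr rfl hsplit, sum_add_distrib, sum_range_succ, sum_range_succ' B,
    ← sum_congr rfl hshift, sum_add_distrib]
  simp [A, B]

lemma mul_sum_hahnW_hahnQ_mul {α : ℝ} {m n : ℕ} (hα : -1 < α) (hn : n ≤ m) (β : ℝ)
    (g : ℝ → ℝ) :
    n * (n + α + β + 1) * ∑ x ∈ range (m + 1), hahnW x α β m * hahnQ n x α β m * g x
      = ∑ x ∈ range m, hahnW x α β m * ((x + α + 1) * (m - x))
          * (hahnQ n (x + 1) α β m - hahnQ n x α β m) * (g (x + 1) - g x) := by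
  rw [mul_sum, ← sum_hahnW_mul_hahnOp_mul α β m (hahnQ n · α β m) g]
  refine sum_congr rfl fun x _ => ?_
  rw [hahnOp_hahnQ hα hn]
  ring

lemma sum_hahnW_hahnQ_mul_hahnQ_of_ne {α β : ℝ} {m l n : ℕ} (hα : -1 < α) (hβ : -1 < β)
    (hl : l ≤ m) (hn : n ≤ m) (hln : l ≠ n) :
    ∑ x ∈ range (m + 1), hahnW x α β m * hahnQ l x α β m * hahnQ n x α β m = 0 := by
  have hlQ := mul_sum_hahnW_hahnQ_mul hα hl β (hahnQ n · α β m)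
  have hnQ := mul_sum_hahnW_hahnQ_mul hα hn β (hahnQ l · α β m)
  have hne : (l : ℝ) * (l + α + β + 1) - n * (n + α + β + 1) ≠ 0 := by
    have hln' : (l : ℝ) ≠ n := Nat.cast_injective.ne hln
    have hpos : (0 : ℝ) < l + n + α + β + 1 := by
      have : (1 : ℝ) ≤ l + n := by exact_mod_cast (by omega : 1 ≤ l + n)
      linarith
    rw [show (l : ℝ) * (l + α + β + 1) - n * (n + α + β + 1) = (l - n) * (l + n + α + β + 1) by
      ring]
    exact mul_ne_zero (sub_ne_zero.mpr hln') hpos.ne'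
  refine (mul_eq_zero.mp ?_).resolve_left hne
  rw [sub_mul, hlQ, show ∑ x ∈ range (m + 1), hahnW x α β m * hahnQ l x α β m * hahnQ n x α β m
    = ∑ x ∈ range (m + 1), hahnW x α β m * hahnQ n x α β m * hahnQ l x α β m from
      sum_congr rfl fun _ _ => by ring, hnQ, ← sum_sub_distrib]
  exact sum_eq_zero fun _ _ => by ring

lemma sum_hahnW_hahnQ_succ_mul_self {α : ℝ} {m n : ℕ} (hα : -1 < α) (hn : n ≤ m) (β : ℝ) :
    (n + 1) * (n + α + β + 2) * ∑ x ∈ range (m + 1 + 1),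
        hahnW x α β (m + 1) * hahnQ (n + 1) x α β (m + 1) * hahnQ (n + 1) x α β (m + 1)
      = (β + 1) * (n + 1) ^ 2 * (n + α + β + 2) ^ 2 / ((α + 1) * (m + 1) ^ 2)
        * ∑ x ∈ range (m + 1), hahnW x (α + 1) (β + 1) m
            * hahnQ n x (α + 1) (β + 1) m * hahnQ n x (α + 1) (β + 1) m := by
  have h := mul_sum_hahnW_hahnQ_mul hα (Nat.succ_le_succ hn) β (hahnQ (n + 1) · α β (m + 1))
  push_cast at h
  rw [show (n : ℝ) + 1 + α + β + 1 = n + α + β + 2 by ring] at h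
  rw [h, mul_sum]
  refine sum_congr rfl fun x hx => ?_
  rw [hahnQ_forward_shift]
  have hw := hahnW_mul_eq_hahnW_shift (Nat.lt_succ_iff.mp (mem_range.mp hx)) α β
  have hα1 : α + 1 ≠ 0 := by linarith
  set c := (n + 1) * (n + α + β + 2) / ((α + 1) * (m + 1))
  calc hahnW x α β (m + 1) * ((x + α + 1) * (m + 1 - x)) * (-c * hahnQ n x (α + 1) (β + 1) m)
        * (-c * hahnQ n x (α + 1) (β + 1) m)
      = (α + 1) * (β + 1) * hahnW x (α + 1) (β + 1) m * c ^ 2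
          * hahnQ n x (α + 1) (β + 1) m ^ 2 := by
        rw [← hw]; ring
    _ = _ := by simp only [c]; field_simp

lemma hahnH_succ (n : ℕ) (α β : ℝ) (m : ℕ) :
    hahnH (n + 1) α β (m + 1)
      = (β + 1) * (n + 1) * (n + α + β + 2) / ((α + 1) * (m + 1) ^ 2)
        * hahnH n (α + 1) (β + 1) m := by
  unfold hahnH
  rw [poch_succ_left _ (m + 1), poch_succ_left (β + 1) n, poch_succ_left (α + 1) n,
    poch_succ_left _ n, pow_succ, Nat.factorial_succ, Nat.factorial_succ]
  push_cast
  simp only [div_eq_mul_inv, mul_inv, inv_neg, sq]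
  ring_nf

lemma hahnH_zero {α β : ℝ} (hab : α + β + 1 ≠ 0) (m : ℕ) :
    hahnH 0 α β m = poch (α + β + 2) m / m.factorial := by
  unfold hahnH
  rw [poch_succ_left]
  simp only [pow_zero, poch_zero, Nat.factorial_zero, Nat.cast_zero, Nat.cast_one, mul_zero,
    zero_add, one_mul, mul_one]
  rw [show α + β + 1 + 1 = α + β + 2 by ring]
  field_simp

lemma sum_hahnW_hahnQ_mul_self {α β : ℝ} {m n : ℕ} (hα : -1 < α) (hβ : -1 < β)
    (hab : α + β + 1 ≠ 0) (hn : n ≤ m) :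
    ∑ x ∈ range (m + 1), hahnW x α β m * hahnQ n x α β m * hahnQ n x α β m = hahnH n α β m := by
  induction n generalizing α β m with
  | zero =>
    simp only [hahnQ_zero, mul_one]
    rw [hahnH_zero hab, show α + β + 2 = (α + 1) + (β + 1) by ring, poch_add_div_factorial]
    rfl
  | succ n ih =>
    obtain ⟨m, rfl⟩ := Nat.exists_eq_add_of_le' (Nat.one_le_of_lt hn)
    have hstep := sum_hahnW_hahnQ_succ_mul_self hα (Nat.le_of_succ_le_succ hn) β
    rw [ih (by linarith) (by linarith) (by linarith) (Nat.le_of_succ_le_succ hn)] at hstep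
    have hev : ((n : ℝ) + 1) * (n + α + β + 2) ≠ 0 := by
      have : (0 : ℝ) ≤ n := n.cast_nonneg
      exact mul_ne_zero (by positivity) (by linarith)
    apply mul_left_cancel₀ hev
    rw [hstep, hahnH_succ]
    have hα1 : α + 1 ≠ 0 := by linarith
    field_simp

lemma hahnH_pos {α β : ℝ} {m n : ℕ} (hα : -1 < α) (hβ : -1 < β) (hab : α + β + 1 ≠ 0)
    (hn : n ≤ m) : 0 < hahnH n α β m := by
  rw [← sum_hahnW_hahnQ_mul_self hα hβ hab hn, sum_range_succ']
  refine add_pos_of_nonneg_of_pos (sum_nonneg fun x _ => ?_) ?_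
  · rw [mul_assoc]
    exact mul_nonneg (hahnW_pos hα hβ _ _).le (mul_self_nonneg _)
  · simpa [hahnQ_at_zero] using hahnW_pos hα hβ 0 m

lemma sum_hahnQt_mul_hahnQt {α β : ℝ} {m l n : ℕ} (hα : -1 < α) (hβ : -1 < β)
    (hab : α + β + 1 ≠ 0) (hl : l ≤ m) (hn : n ≤ m) :
    ∑ x ∈ range (m + 1), hahnQt l x α β m * hahnQt n x α β m = if l = n then 1 else 0 := by
  have hterm : ∀ x ∈ range (m + 1), hahnQt l x α β m * hahnQt n x α β m
      = hahnW x α β m * hahnQ l x α β m * hahnQ n x α β m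
        / (√(hahnH l α β m) * √(hahnH n α β m)) := by
    intro x _
    rw [hahnQt, hahnQt, div_mul_div_comm, mul_mul_mul_comm,
      Real.mul_self_sqrt (hahnW_pos hα hβ x m).le, mul_assoc]
  rw [sum_congr rfl hterm, ← sum_div]
  split_ifs with hln
  · subst hln
    rw [sum_hahnW_hahnQ_mul_self hα hβ hab hl, Real.mul_self_sqrt (hahnH_pos hα hβ hab hl).le,
      div_self (hahnH_pos hα hβ hab hl).ne']
  · rw [sum_hahnW_hahnQ_mul_hahnQ_of_ne hα hβ hl hn hln, zero_div]

end Orthogonality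

section Interlacing

lemma sum_range_two_mul {M : Type*} [AddCommMonoid M] (f : ℕ → M) (N : ℕ) :
    ∑ x ∈ range (2 * N), f x = ∑ i ∈ range N, (f (2 * i) + f (2 * i + 1)) := by
  induction N with
  | zero => simp
  | succ N ih =>
    rw [mul_add, mul_one, sum_range_succ, sum_range_succ, sum_range_succ, ih, add_assoc]

/-- Column `c` of `hahnU` belongs to the degree `foldIndex m c`, counted outwards from the
middle of `0, …, 2m+1`; `foldSign m c` records on which side of the middle it lies. -/
def foldIndex (m c : ℕ) : ℕ := if c ≤ m then m - c else c - m - 1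

def foldSign (m c : ℕ) : ℝ := if c ≤ m then -1 else 1

lemma foldIndex_le {m c : ℕ} (hc : c < 2 * m + 2) : foldIndex m c ≤ m := by
  unfold foldIndex; split_ifs <;> omega

lemma foldIndex_foldSign_kronecker (m c c' : ℕ) :
    ((if foldIndex m c = foldIndex m c' then 1 else 0)
      + foldSign m c * foldSign m c' * (if foldIndex m c = foldIndex m c' then 1 else 0)) / 2
      = if c = c' then (1 : ℝ) else 0 := by
  unfold foldIndex foldSign
  split_ifs <;> first | omega | norm_num

noncomputable def interlaceEntry (m : ℕ) (φ ψ : ℕ → ℕ → ℝ) (r c : ℕ) : ℝ :=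
  if r % 2 = 0 then ((-1) ^ (r / 2) / √2) * φ (foldIndex m c) (r / 2)
  else foldSign m c * ((-1) ^ (r / 2) / √2) * ψ (foldIndex m c) (r / 2)

lemma hahnU_apply (α β : ℝ) (m : ℕ) (r c : Fin (2 * m + 2)) :
    hahnU α β m r c = interlaceEntry m (fun j x => hahnQt j x α β m)
      (fun j x => hahnQt j x (α + 1) (β - 1) m) r c := rfl

lemma interlaceEntry_pair (m : ℕ) (φ ψ : ℕ → ℕ → ℝ) (i c c' : ℕ) :
    interlaceEntry m φ ψ (2 * i) c * interlaceEntry m φ ψ (2 * i) c'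
      + interlaceEntry m φ ψ (2 * i + 1) c * interlaceEntry m φ ψ (2 * i + 1) c'
      = (φ (foldIndex m c) i * φ (foldIndex m c') i
        + foldSign m c * foldSign m c' * (ψ (foldIndex m c) i * ψ (foldIndex m c') i)) / 2 := by
  have hsq : ((-1 : ℝ) ^ i / √2) * ((-1) ^ i / √2) = 1 / 2 := by
    rw [div_mul_div_comm, ← pow_add, ← two_mul, pow_mul, neg_one_sq, one_pow,
      Real.mul_self_sqrt zero_le_two]
  simp only [interlaceEntry, Nat.mul_mod_right, Nat.mul_add_mod, Nat.one_mod, if_true,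
    one_ne_zero, if_false, Nat.mul_div_cancel_left _ two_pos, Nat.mul_add_div two_pos,
    Nat.div_eq_of_lt one_lt_two]
  linear_combination (φ (foldIndex m c) i * φ (foldIndex m c') i
    + foldSign m c * foldSign m c' * (ψ (foldIndex m c) i * ψ (foldIndex m c') i)) * hsq

lemma sum_interlaceEntry_mul {m : ℕ} {φ ψ : ℕ → ℕ → ℝ}
    (hφ : ∀ l ≤ m, ∀ n ≤ m, ∑ x ∈ range (m + 1), φ l x * φ n x = if l = n then 1 else 0)
    (hψ : ∀ l ≤ m, ∀ n ≤ m, ∑ x ∈ range (m + 1), ψ l x * ψ n x = if l = n then 1 else 0)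
    {c c' : ℕ} (hc : c < 2 * m + 2) (hc' : c' < 2 * m + 2) :
    ∑ r ∈ range (2 * m + 2), interlaceEntry m φ ψ r c * interlaceEntry m φ ψ r c'
      = if c = c' then 1 else 0 := by
  rw [show 2 * m + 2 = 2 * (m + 1) by ring, sum_range_two_mul,
    sum_congr rfl fun i _ => interlaceEntry_pair m φ ψ i c c', ← sum_div, sum_add_distrib,
    ← mul_sum, hφ _ (foldIndex_le hc) _ (foldIndex_le hc'),
    hψ _ (foldIndex_le hc) _ (foldIndex_le hc'), foldIndex_foldSign_kronecker]

end Interlacing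

theorem hahnU_orthogonal (m : ℕ) (α β : ℝ) (hα : α > -1) (hβ : β > 0) :
    (hahnU α β m)ᵀ * hahnU α β m = 1 ∧ hahnU α β m * (hahnU α β m)ᵀ = 1 := by
  have hUU : (hahnU α β m)ᵀ * hahnU α β m = 1 := by
    ext c c'
    simp only [mul_apply, one_apply, transpose_apply, hahnU_apply, ← Fin.val_inj]
    rw [Fin.sum_univ_eq_sum_range (fun r => interlaceEntry m _ _ r c * interlaceEntry m _ _ r c')]
    exact sum_interlaceEntry_mul
      (fun l hl n hn => sum_hahnQt_mul_hahnQt hα (by linarith) (by linarith) hl hn)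
      (fun l hl n hn => sum_hahnQt_mul_hahnQt (by linarith) (by linarith) (by linarith) hl hn)
      c.isLt c'.isLt
  exact ⟨hUU, mul_eq_one_comm.mp hUU⟩
end

section
/- When β = α+1, the eigenvalues of the interaction matrix M with couplings J_k = √((k+1)(2m+1-k)) for k odd and J_k = √((k+2α+2)(2m+2α+2-k)) for k even are exactly the numbers ±2(α+k+1) for k = 0,1,…,m; in particular if 2α is an integer, all eigenvalues are integers (up to the common shift), and for half-integer α the spectrum consists of even integers shifted by 2α+2. -/
open Finset Matrix

/-!
Write `a = α + 1` and `N k = ∏_{i<k} (ε² - 4 (a + i)²)`. The leading principal minors `D n` of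
`ε - M` obey the continuant recurrence `D (n + 2) = ε D (n + 1) - J n ^ 2 D n`, where for
`β = α + 1` the couplings factor as `J (2j) ^ 2 = 4 (a + j) (a + m - j)` and
`J (2j + 1) ^ 2 = 4 (j + 1) (m - j)`. In the Newton basis `N k` the recurrence is solved by
`D (2j) = ∑ₖ C(j, k) ∏_{k ≤ i < j} (-4 (a + i) (m - i)) N k`, and `D (2j + 1)` is `ε` times the same
sum with `a + i` replaced by `a + i + 1`. At `j = m + 1` every coefficient except the top one has
the factor `m - m = 0`, so `det (ε - M) = N (m + 1)`, whose roots are `ε = ±2 (a + k)`, `k ≤ m`.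
-/

section Tridiagonal

variable {R : Type*} [CommRing R]

def tridiagonal (d e : ℕ → R) (n : ℕ) : Matrix (Fin n) (Fin n) R :=
  Matrix.of fun i j =>
    if (i : ℕ) = j then d i
    else if (i : ℕ) + 1 = j then e i
    else if (j : ℕ) + 1 = i then e j
    else 0

variable {d e : ℕ → R} {n : ℕ}

theorem tridiagonal_apply_eq_zero {i j : Fin n} (h : (i : ℕ) + 1 < j ∨ (j : ℕ) + 1 < i) :
    tridiagonal d e n i j = 0 := by
  simp only [tridiagonal, of_apply]
  split_ifs <;> first | rfl | omega

theorem tridiagonal_apply_self (i : Fin n) : tridiagonal d e n i i = d i := by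
  simp [tridiagonal]

theorem tridiagonal_apply_of_succ_eq {i j : Fin n} (h : (j : ℕ) + 1 = i) :
    tridiagonal d e n i j = e j := by
  simp only [tridiagonal, of_apply]
  split_ifs <;> first | rfl | omega

theorem tridiagonal_apply_of_eq_succ {i j : Fin n} (h : (i : ℕ) + 1 = j) :
    tridiagonal d e n i j = e i := by
  simp only [tridiagonal, of_apply]
  split_ifs <;> first | rfl | omega

theorem submatrix_castSucc_tridiagonal :
    (tridiagonal d e (n + 1)).submatrix Fin.castSucc Fin.castSucc = tridiagonal d e n := by
  ext i j
  simp [tridiagonal]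

variable (d e n) in
theorem det_tridiagonal_succ_succ :
    (tridiagonal d e (n + 2)).det =
      d (n + 1) * (tridiagonal d e (n + 1)).det - e n ^ 2 * (tridiagonal d e n).det := by
  have hcols : (Fin.last n).castSucc.succAbove ∘ Fin.castSucc = Fin.castSucc ∘ Fin.castSucc :=
    funext fun j => Fin.succAbove_of_castSucc_lt _ _ (by simp [Fin.lt_def])
  -- Expand along the last row; the minor of its subdiagonal entry has `e n` as the only nonzero
  -- entry of its last column.
  have hminor : ((tridiagonal d e (n + 2)).submatrix (Fin.last (n + 1)).succAbove
      (Fin.last n).castSucc.succAbove).det = e n * (tridiagonal d e n).det := by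
    rw [det_succ_column _ (Fin.last n), Fin.sum_univ_castSucc,
      sum_eq_zero fun i _ => ?_, zero_add]
    · simp only [Fin.succAbove_last, submatrix_submatrix, submatrix_apply,
        Fin.succAbove_castSucc_self, hcols, Fin.succ_last]
      rw [← submatrix_submatrix, submatrix_castSucc_tridiagonal, submatrix_castSucc_tridiagonal,
        tridiagonal_apply_of_eq_succ (by simp), Fin.val_last, Even.neg_one_pow ⟨n, rfl⟩, one_mul,
        Fin.val_castSucc, Fin.val_last]
    · simp [tridiagonal_apply_eq_zero, Fin.succAbove_last]
  rw [det_succ_row _ (Fin.last _), Fin.sum_univ_castSucc, Fin.sum_univ_castSucc,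
    sum_eq_zero fun j _ => ?_, zero_add, hminor]
  · rw [Fin.succAbove_last, submatrix_castSucc_tridiagonal, tridiagonal_apply_self,
      tridiagonal_apply_of_succ_eq (by simp)]
    simp only [Fin.val_last, Fin.val_castSucc]
    rw [Even.neg_one_pow ⟨n + 1, rfl⟩, Odd.neg_one_pow ⟨n, by ring⟩]
    ring
  · rw [tridiagonal_apply_eq_zero (Or.inr (by simp)), mul_zero, zero_mul]

theorem smul_one_sub_tridiagonal (ε : R) (d e : ℕ → R) (n : ℕ) :
    ε • (1 : Matrix (Fin n) (Fin n) R) - tridiagonal d e n =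
      tridiagonal (fun k => ε - d k) (fun k => -e k) n := by
  ext i j
  simp only [Matrix.sub_apply, Matrix.smul_apply, Matrix.one_apply, tridiagonal, of_apply,
    smul_eq_mul, Fin.ext_iff]
  split_ifs <;> ring

end Tridiagonal

theorem exists_mulVec_eq_smul_iff_det_eq_zero {n R : Type*} [Fintype n] [DecidableEq n] [CommRing R]
    [IsDomain R] (A : Matrix n n R) (ε : R) :
    (∃ v : n → R, v ≠ 0 ∧ A *ᵥ v = ε • v) ↔ (ε • (1 : Matrix n n R) - A).det = 0 := by
  rw [← exists_mulVec_eq_zero_iff]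
  refine exists_congr fun v => and_congr_right fun _ => ?_
  rw [sub_mulVec, smul_mulVec, one_mulVec, sub_eq_zero, eq_comm]

section MinorFormula

variable (a ε : ℝ) (m : ℕ)

def newtonProd (k : ℕ) : ℝ := ∏ i ∈ range k, (ε ^ 2 - 4 * (a + i) ^ 2)

def minorWeight (b : ℝ) (j k : ℕ) : ℝ := ∏ i ∈ Ico k j, (-4 * (b + i) * (m - i))

def minorFormula (b : ℝ) (j : ℕ) : ℝ :=
  ∑ k ∈ range (j + 1), (j.choose k : ℝ) * minorWeight m b j k * newtonProd a ε k

variable {m}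

theorem minorWeight_self (b : ℝ) (j : ℕ) : minorWeight m b j j = 1 := by
  simp [minorWeight]

theorem minorWeight_succ_left (b : ℝ) {j k : ℕ} (hk : k ≤ j) :
    minorWeight m b (j + 1) k = minorWeight m b j k * (-4 * (b + j) * (m - j)) :=
  prod_Ico_succ_top hk _

theorem minorWeight_of_lt (b : ℝ) {j k : ℕ} (hk : k < j) :
    minorWeight m b j k = -4 * (b + k) * (m - k) * minorWeight m b j (k + 1) :=
  prod_eq_prod_Ico_succ_bot hk _

theorem minorWeight_add_one_mul (b : ℝ) {j k : ℕ} (hk : k ≤ j) :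
    minorWeight m (b + 1) j k * (b + k) = minorWeight m b j k * (b + j) := by
  induction j, hk using Nat.le_induction with
  | base => simp [minorWeight_self]
  | succ j hkj ih =>
    rw [minorWeight_succ_left _ hkj, minorWeight_succ_left _ hkj]
    push_cast
    linear_combination (-4 * (b + j + 1) * (m - j)) * ih

theorem newtonProd_succ (k : ℕ) :
    newtonProd a ε (k + 1) = newtonProd a ε k * (ε ^ 2 - 4 * (a + k) ^ 2) :=
  prod_range_succ _ _

theorem minorFormula_zero (b : ℝ) : minorFormula a ε m b 0 = 1 := by
  simp [minorFormula, minorWeight_self, newtonProd]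

theorem minorFormula_add_one_succ (j : ℕ) :
    minorFormula a ε m (a + 1) (j + 1) =
      minorFormula a ε m a (j + 1) - 4 * (j + 1) * (m - j) * minorFormula a ε m (a + 1) j := by
  have hcoeff : ∀ k ∈ range (j + 1),
      ((j + 1).choose k : ℝ) * minorWeight m (a + 1) (j + 1) k * newtonProd a ε k -
        ((j + 1).choose k : ℝ) * minorWeight m a (j + 1) k * newtonProd a ε k =
      -4 * (j + 1) * (m - j) *
        ((j.choose k : ℝ) * minorWeight m (a + 1) j k * newtonProd a ε k) := by
    intro k hk
    have hkj : k ≤ j := Nat.lt_succ_iff.mp (mem_range.mp hk)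
    have hchoose : ((j + 1).choose k : ℝ) * ((j : ℝ) + 1 - k) = (j.choose k) * (j + 1) := by
      have := congrArg (Nat.cast (R := ℝ)) (Nat.choose_mul_succ_eq j k)
      push_cast [Nat.cast_sub (by omega : k ≤ j + 1)] at this
      linarith
    rw [minorWeight_succ_left _ hkj, minorWeight_succ_left _ hkj]
    linear_combination (-4 * (m - j) * newtonProd a ε k) *
      (((j + 1).choose k : ℝ) * minorWeight_add_one_mul a hkj + minorWeight m (a + 1) j k * hchoose)
  have hdiff : minorFormula a ε m (a + 1) (j + 1) - minorFormula a ε m a (j + 1) =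
      -4 * (j + 1) * (m - j) * minorFormula a ε m (a + 1) j := by
    rw [minorFormula, minorFormula, ← sum_sub_distrib, sum_range_succ, minorWeight_self,
      minorWeight_self, sub_self, add_zero, sum_congr rfl hcoeff, ← mul_sum, minorFormula]
  linarith

theorem minorFormula_succ (j : ℕ) :
    minorFormula a ε m a (j + 1) =
      ε ^ 2 * minorFormula a ε m (a + 1) j -
        4 * (a + j) * (a + m - j) * minorFormula a ε m a j := by
  -- Compare coefficients in the Newton basis: `ε ^ 2 * N k = N (k + 1) + 4 (a + k) ^ 2 * N k`.
  set g : ℕ → ℝ := fun k => 4 * (a + j) * (a + m - j) * minorWeight m a j k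
    - 4 * (a + k) ^ 2 * minorWeight m (a + 1) j k with hg
  set X : ℕ → ℝ := fun k => ((j + 1).choose k : ℝ) * minorWeight m a (j + 1) k
    + (j.choose k) * g k with hX
  have hX0 : X 0 = 0 := by
    have h := minorWeight_add_one_mul (m := m) a (Nat.zero_le j)
    simp only [hX, hg, Nat.choose_zero_right, minorWeight_succ_left _ (Nat.zero_le j)]
    push_cast at h ⊢
    linear_combination (-4 * a) * h
  have hXsucc : ∀ k ≤ j, X (k + 1) = (j.choose k) * minorWeight m (a + 1) j k := by
    intro k hkj
    rcases hkj.lt_or_eq with hk | rfl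
    · have hw := minorWeight_add_one_mul (m := m) a (Nat.succ_le_of_lt hk)
      have hpascal := congrArg (Nat.cast (R := ℝ)) (Nat.choose_succ_succ' j k)
      have hchoose := congrArg (Nat.cast (R := ℝ)) (Nat.choose_succ_right_eq j k)
      simp only [hX, hg, minorWeight_succ_left _ (Nat.succ_le_of_lt hk), minorWeight_of_lt _ hk]
      push_cast [Nat.cast_sub hk.le] at hw hpascal hchoose ⊢
      linear_combination
        (-4 * (a + k + 1) * minorWeight m (a + 1) j (k + 1)) * hchoose
        - 4 * (a + k + 1) * minorWeight m (a + 1) j (k + 1) * (m - j) * hpascal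
        - (-4 * (m - j) * ((j + 1).choose (k + 1) : ℝ) +
            4 * (a + m - j) * (j.choose (k + 1) : ℝ)) * hw
    · simp [hX, minorWeight_self]
  have hshift : ∑ k ∈ range (j + 2), X k * newtonProd a ε k =
      ∑ k ∈ range (j + 1),
        (j.choose k : ℝ) * minorWeight m (a + 1) j k * newtonProd a ε (k + 1) := by
    rw [sum_range_succ', hX0, zero_mul, add_zero]
    exact sum_congr rfl fun k hk => by rw [hXsucc k (Nat.lt_succ_iff.mp (mem_range.mp hk))]
  have hexpand : ∑ k ∈ range (j + 2), X k * newtonProd a ε k =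
      minorFormula a ε m a (j + 1) +
        ∑ k ∈ range (j + 1), (j.choose k : ℝ) * g k * newtonProd a ε k := by
    have hextend : ∑ k ∈ range (j + 1), (j.choose k : ℝ) * g k * newtonProd a ε k =
        ∑ k ∈ range (j + 2), (j.choose k : ℝ) * g k * newtonProd a ε k := by
      rw [sum_range_succ _ (j + 1), Nat.choose_succ_self, Nat.cast_zero, zero_mul, zero_mul,
        add_zero]
    rw [hextend, minorFormula, ← sum_add_distrib]
    exact sum_congr rfl fun k _ => by ring
  have hsq : ε ^ 2 * minorFormula a ε m (a + 1) j -
      4 * (a + j) * (a + m - j) * minorFormula a ε m a j =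
      ∑ k ∈ range (j + 1), (j.choose k : ℝ) * minorWeight m (a + 1) j k * newtonProd a ε (k + 1)
        - ∑ k ∈ range (j + 1), (j.choose k : ℝ) * g k * newtonProd a ε k := by
    rw [minorFormula, minorFormula, mul_sum, mul_sum, ← sum_sub_distrib, ← sum_sub_distrib]
    exact sum_congr rfl fun k _ => by rw [newtonProd_succ]; ring
  linarith

theorem minorFormula_eq_newtonProd : minorFormula a ε m a (m + 1) = newtonProd a ε (m + 1) := by
  rw [minorFormula, sum_range_succ, minorWeight_self, Nat.choose_self, Nat.cast_one, one_mul,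
    one_mul, add_eq_right]
  refine sum_eq_zero fun k hk => ?_
  rw [minorWeight, prod_eq_zero (i := m) (by simpa using mem_range.mp hk) (by simp)]
  simp

end MinorFormula

theorem det_tridiagonal_eq_newtonProd {a ε : ℝ} {m : ℕ} {J : ℕ → ℝ}
    (heven : ∀ j ≤ m, J (2 * j) ^ 2 = 4 * (a + j) * (a + m - j))
    (hodd : ∀ j < m, J (2 * j + 1) ^ 2 = 4 * (j + 1) * (m - j)) :
    (tridiagonal (fun _ => ε) J (2 * m + 2)).det = newtonProd a ε (m + 1) := by
  have hminors : ∀ j ≤ m, (tridiagonal (fun _ => ε) J (2 * j)).det = minorFormula a ε m a j ∧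
      (tridiagonal (fun _ => ε) J (2 * j + 1)).det = ε * minorFormula a ε m (a + 1) j := by
    intro j hj
    induction j with
    | zero =>
      simp [minorFormula_zero, det_unique, tridiagonal_apply_self]
    | succ j ih =>
      obtain ⟨h0, h1⟩ := ih (by omega)
      have h2 : (tridiagonal (fun _ => ε) J (2 * (j + 1))).det = minorFormula a ε m a (j + 1) := by
        rw [show 2 * (j + 1) = 2 * j + 2 by ring, det_tridiagonal_succ_succ, h1, h0,
          heven j (by omega), minorFormula_succ]
        ring
      refine ⟨h2, ?_⟩
      rw [show 2 * (j + 1) + 1 = 2 * j + 1 + 2 by ring, det_tridiagonal_succ_succ,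
        show 2 * j + 1 + 1 = 2 * (j + 1) by ring, h2, h1, hodd j (by omega),
        minorFormula_add_one_succ]
      ring
  obtain ⟨h0, h1⟩ := hminors m le_rfl
  rw [det_tridiagonal_succ_succ, h1, h0, heven m le_rfl, ← minorFormula_eq_newtonProd,
    minorFormula_succ]
  ring

theorem hahnM_eq_tridiagonal (α β : ℝ) (m : ℕ) :
    hahnM α β m = tridiagonal 0 (hahnJ α β m) (2 * m + 2) := by
  ext i j
  simp only [hahnM, tridiagonal, of_apply, Pi.zero_apply]
  split_ifs <;> first | rfl | omega

theorem hahnJ_two_mul_sq {α β : ℝ} {m j : ℕ} (hα : -1 < α) (hβ : 0 ≤ β) (hj : j ≤ m) :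
    hahnJ α β m (2 * j) ^ 2 = 4 * (α + 1 + j) * (β + m - j) := by
  have hjm : (j : ℝ) ≤ m := by exact_mod_cast hj
  rw [hahnJ, if_neg (by omega), Real.sq_sqrt (by push_cast; nlinarith)]
  push_cast
  ring

theorem hahnJ_two_mul_add_one_sq (α β : ℝ) {m j : ℕ} (hj : j ≤ m) :
    hahnJ α β m (2 * j + 1) ^ 2 = 4 * (j + 1) * (m - j) := by
  have hjm : (j : ℝ) ≤ m := by exact_mod_cast hj
  rw [hahnJ, if_pos (by omega), Real.sq_sqrt (by push_cast; nlinarith)]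
  push_cast
  ring

theorem det_smul_one_sub_hahnM {α : ℝ} (hα : -1 < α) (m : ℕ) (ε : ℝ) :
    (ε • (1 : Matrix _ _ ℝ) - hahnM α (α + 1) m).det = newtonProd (α + 1) ε (m + 1) := by
  rw [hahnM_eq_tridiagonal, smul_one_sub_tridiagonal]
  simp only [Pi.zero_apply, sub_zero]
  refine det_tridiagonal_eq_newtonProd (fun j hj => ?_) (fun j hj => ?_)
  · rw [neg_sq, hahnJ_two_mul_sq hα (by linarith) hj]
  · rw [neg_sq, hahnJ_two_mul_add_one_sq _ _ hj.le]

theorem exists_eigenvector_hahnM_iff {α : ℝ} (hα : -1 < α) (m : ℕ) (ε : ℝ) :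
    (∃ v : Fin (2 * m + 2) → ℝ, v ≠ 0 ∧ (hahnM α (α + 1) m).mulVec v = ε • v) ↔
      ∃ k : ℕ, k ≤ m ∧ (ε = 2 * (α + k + 1) ∨ ε = -(2 * (α + k + 1))) := by
  rw [exists_mulVec_eq_smul_iff_det_eq_zero, det_smul_one_sub_hahnM hα, newtonProd,
    prod_eq_zero_iff]
  refine exists_congr fun k => and_congr (by simp) ?_
  rw [sub_eq_zero, ← sq_eq_sq_iff_eq_or_eq_neg]
  ring_nf

theorem hahn_spectrum_beta_eq_alpha_add_one (m : ℕ) (α : ℝ) (hα : α > -1) :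
    (∀ ε : ℝ,
      (∃ v : Fin (2 * m + 2) → ℝ, v ≠ 0 ∧ (hahnM α (α + 1) m).mulVec v = ε • v) ↔
      (∃ k : ℕ, k ≤ m ∧ (ε = 2 * (α + k + 1) ∨ ε = -(2 * (α + k + 1))))) ∧
    ((∃ z : ℤ, 2 * α = (z : ℝ)) →
      ∀ ε : ℝ, (∃ v : Fin (2 * m + 2) → ℝ, v ≠ 0 ∧ (hahnM α (α + 1) m).mulVec v = ε • v) →
        ∃ z : ℤ, ε = (z : ℝ) + (2 * α + 2) ∨ ε = -((z : ℝ) + (2 * α + 2))) ∧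
    ((∃ l : ℤ, α = (l : ℝ) + 1 / 2) →
      ∀ ε : ℝ, (∃ v : Fin (2 * m + 2) → ℝ, v ≠ 0 ∧ (hahnM α (α + 1) m).mulVec v = ε • v) →
        ∃ z : ℤ, Even z ∧ (ε = (z : ℝ) + (2 * α + 2) ∨ ε = -((z : ℝ) + (2 * α + 2)))) := by
  refine ⟨exists_eigenvector_hahnM_iff hα m, ?_, ?_⟩
  · rintro - ε hε
    obtain ⟨k, -, h | h⟩ := (exists_eigenvector_hahnM_iff hα m ε).mp hε
    · exact ⟨2 * k, Or.inl (by rw [h]; push_cast; ring)⟩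
    · exact ⟨2 * k, Or.inr (by rw [h]; push_cast; ring)⟩
  · rintro - ε hε
    obtain ⟨k, -, h | h⟩ := (exists_eigenvector_hahnM_iff hα m ε).mp hε
    · exact ⟨2 * k, even_two_mul _, Or.inl (by rw [h]; push_cast; ring)⟩
    · exact ⟨2 * k, even_two_mul _, Or.inr (by rw [h]; push_cast; ring)⟩
end
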